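/- Let W be a word over {a,b,c,d} representing an element g of the Grigorchuk group G. Then N^{1,1}_{b,c}(W) ≡ β_01(g) modulo 2. -/
import Mathlib


/-!
We model the group `Aut(T)` of automorphisms of the binary rooted tree via portraits:
an automorphism is uniquely determined by the function `List Bool → Bool` recording,
for every vertex `u` (a finite binary word, `false = 0`, `true = 1`), whether the
automorphism is active (i.e. swaps the two subtrees) at `u`.  Under this identification
`α_u(g) = g u`, the section of `g` at `u` is `fun v => g (u ++ v)`, and the group
operation corresponds to composition of tree automorphisms.
-/

/-- Automorphisms of the binary rooted tree, encoded by their portraits. -/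
def AutT : Type := List Bool → Bool

namespace AutT

/-- The section of a tree automorphism at a first-level vertex. -/
def sec (g : AutT) (x : Bool) : AutT := fun u => g (x :: u)

/-- The section of a tree automorphism at an arbitrary vertex `u`. -/
def secAt (g : AutT) (u : List Bool) : AutT := fun v => g (u ++ v)

/-- The activity (decoration of the portrait) of `g` at the vertex `u`:
`α_u(g) = 1` iff `g` is active at `u`. -/
def alpha (g : AutT) (u : List Bool) : Bool := g u

/-- The action of a tree automorphism on the vertices of the tree. -/
def act : AutT → List Bool → List Bool
  | _, [] => []
  | g, x :: u => (xor (g []) x) :: act (sec g x) u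

/-- Auxiliary function defining the product of two tree automorphisms
(`g * h` acts as `g` followed by `h`). -/
def mulAux : List Bool → AutT → AutT → Bool
  | [], g, h => xor (g []) (h [])
  | x :: u, g, h => mulAux u (sec g x) (sec h (xor x (g [])))

instance : Mul AutT := ⟨fun g h u => mulAux u g h⟩

/-- Auxiliary function defining the inverse of a tree automorphism. -/
def invAux : List Bool → AutT → Bool
  | [], g => g []
  | x :: u, g => invAux u (sec g (xor x (g [])))

instance : One AutT := ⟨fun _ => false⟩
instance : Inv AutT := ⟨fun g u => invAux u g⟩

lemma one_apply (u : List Bool) : (1 : AutT) u = false := rfl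

lemma mul_apply_nil (g h : AutT) : (g * h) [] = xor (g []) (h []) := rfl

lemma mul_apply_cons (g h : AutT) (x : Bool) (u : List Bool) :
    (g * h) (x :: u) = (sec g x * sec h (xor x (g []))) u := rfl

lemma sec_mul (g h : AutT) (x : Bool) :
    sec (g * h) x = sec g x * sec h (xor x (g [])) := rfl

lemma sec_one (x : Bool) : sec (1 : AutT) x = 1 := rfl

lemma inv_apply_nil (g : AutT) : (g⁻¹ : AutT) [] = g [] := rfl

lemma sec_inv (g : AutT) (x : Bool) :
    sec (g⁻¹ : AutT) x = (sec g (xor x (g [])))⁻¹ := rfl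

private lemma mul_assoc' (g h k : AutT) : g * h * k = g * (h * k) := by
  funext u
  induction u generalizing g h k with
  | nil => simp [mul_apply_nil, Bool.xor_assoc]
  | cons x u ih =>
      rw [mul_apply_cons, mul_apply_cons, sec_mul, mul_apply_nil, sec_mul, ih,
        Bool.xor_assoc]

private lemma one_mul' (g : AutT) : 1 * g = g := by
  funext u
  induction u generalizing g with
  | nil => simp [mul_apply_nil, one_apply]
  | cons x u ih => rw [mul_apply_cons, sec_one, one_apply, Bool.xor_false, ih]; rfl

private lemma inv_mul_cancel' (g : AutT) : g⁻¹ * g = 1 := by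
  funext u
  induction u generalizing g with
  | nil => simp [mul_apply_nil, inv_apply_nil, one_apply]
  | cons x u ih =>
      rw [mul_apply_cons, inv_apply_nil, sec_inv, ih]; rfl

instance : Group AutT :=
  Group.ofLeftAxioms mul_assoc' one_mul' inv_mul_cancel'

/-- The generator `a = (1,1)σ` of the Grigorchuk group. -/
def genA : AutT := fun u => decide (u = [])

/-- The generators `b`, `c`, `d` of the Grigorchuk group, defined simultaneously:
`bcdAux 0 = b = (a, c)`, `bcdAux 1 = c = (a, d)`, `bcdAux 2 = d = (1, b)`. -/
def bcdAux : Fin 3 → List Bool → Bool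
  | _, [] => false
  | i, false :: u => if i.val = 2 then false else decide (u = [])
  | i, true :: u => bcdAux (i + 1) u

/-- The generator `b = (a, c)` of the Grigorchuk group. -/
def genB : AutT := bcdAux 0

/-- The generator `c = (a, d)` of the Grigorchuk group. -/
def genC : AutT := bcdAux 1

/-- The generator `d = (1, b)` of the Grigorchuk group. -/
def genD : AutT := bcdAux 2

/-- The Grigorchuk group, as a subgroup of the group of binary rooted tree
automorphisms. -/
def Grigorchuk : Subgroup AutT := Subgroup.closure {genA, genB, genC, genD}

/-- `β_{xy}(g) = α_{xy}(g) + α_{x ȳ 0}(g) + α_{x ȳ 1}(g)` (mod 2). -/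
def beta (g : AutT) (x y : Bool) : Bool :=
  xor (g [x, y]) (xor (g [x, !y, false]) (g [x, !y, true]))

end AutT
/-!
Words over the alphabet `{a, b, c, d}`, encoded as lists over `Fin 4`
(`0 = a`, `1 = b`, `2 = c`, `3 = d`).
-/

/-- Is the letter one of the `{b,c}`-letters? -/
def isBC (x : Fin 4) : Bool := decide (x = 1 ∨ x = 2)

/-- The parity (number modulo 2) of occurrences of the letter `a` before position `i`
in the word `W`. -/
def aParity (W : List (Fin 4)) (i : ℕ) : ℕ := (W.take i).count 0 % 2

/-- The number of `{b,c}`-letters of parity `p` occurring before position `i` in `W`. -/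
def NbcBefore (W : List (Fin 4)) (p : ℕ) (i : ℕ) : ℕ :=
  ((Finset.range i).filter fun j => isBC (W.getD j 0) = true ∧ aParity W j = p).card

/-- `N^p_{b,c}(W)`: the number of `{b,c}`-letters of parity `p` in `W`. -/
def Nbc (W : List (Fin 4)) (p : ℕ) : ℕ := NbcBefore W p W.length

/-- `N^{p,q}_{b,c}(W)`: the number of `{b,c}`-letters `ℓ` of parity `p` in `W` such that
the number of `{b,c}`-letters of parity `p̄` appearing before `ℓ` in `W` has parity `q`. -/
def Nbc2 (W : List (Fin 4)) (p q : ℕ) : ℕ :=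
  ((Finset.range W.length).filter fun i =>
    isBC (W.getD i 0) = true ∧ aParity W i = p ∧ NbcBefore W (1 - p) i % 2 = q).card
namespace AutT

/-- The letters `a`, `b`, `c`, `d` as tree automorphisms. -/
def gen : Fin 4 → AutT := ![genA, genB, genC, genD]

end AutT

open AutT

section AuxProof
open AutT

lemma mul_def' (g h : AutT) (u : List Bool) : (g * h) u = AutT.mulAux u g h := rfl

lemma beta_mul (g h : AutT) :
    beta (g * h) false true =
      xor (beta g false true)
        (xor (h [g [], !(g [false])])
          (xor (h [g [], g [false], g [false, false]])
               (h [g [], g [false], !(g [false, false])]))) := by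
  simp only [beta, mul_def', mulAux, sec, Bool.not_true, Bool.false_xor, Bool.true_xor]
  generalize g [] = e0
  generalize g [false] = e1
  generalize g [false, false] = e2
  generalize g [false, true] = a1
  generalize g [false, false, false] = a2
  generalize g [false, false, true] = a3
  cases e0 <;> cases e1 <;> cases e2 <;> cases a1 <;> cases a2 <;> cases a3 <;>
    cases h [true, true] <;> simp

lemma beta_gen (i : Fin 4) (e0 e1 e2 : Bool) :
    (xor (gen i [e0, !e1])
      (xor (gen i [e0, e1, e2]) (gen i [e0, e1, !e2])))
      = (isBC i && (e0 && e1)) := by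
  fin_cases i <;> cases e0 <;> cases e1 <;> cases e2 <;> decide

lemma gen_nil (i : Fin 4) : gen i [] = decide (i = 0) := by
  fin_cases i <;> decide

lemma gen_single (i : Fin 4) (x : Bool) : gen i [x] = (isBC i && !x) := by
  fin_cases i <;> cases x <;> decide

lemma mul_apply_single (g h : AutT) : (g * h) [false] = xor (g [false]) (h [g []]) := by
  simp only [mul_def', mulAux, sec, Bool.false_xor]

lemma aParity_append' (W : List (Fin 4)) (ℓ : Fin 4) (i : ℕ) (h : i ≤ W.length) :
    aParity (W ++ [ℓ]) i = aParity W i := by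
  unfold aParity; rw [List.take_append_of_le_length h]

lemma NbcBefore_append' (W : List (Fin 4)) (ℓ : Fin 4) (p i : ℕ) (h : i ≤ W.length) :
    NbcBefore (W ++ [ℓ]) p i = NbcBefore W p i := by
  unfold NbcBefore
  congr 1
  apply Finset.filter_congr
  intro j hj
  rw [Finset.mem_range] at hj
  have hj' : j < W.length := lt_of_lt_of_le hj h
  rw [List.getD_append _ _ _ _ hj', aParity_append' W ℓ j hj'.le]

lemma getD_append_last (W : List (Fin 4)) (ℓ : Fin 4) :
    (W ++ [ℓ]).getD W.length 0 = ℓ := by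
  simp [List.getD_append_right]

lemma NbcBefore_append_succ (W : List (Fin 4)) (ℓ : Fin 4) (p : ℕ) :
    NbcBefore (W ++ [ℓ]) p (W.length + 1)
      = NbcBefore W p W.length
        + (if isBC ℓ = true ∧ aParity W W.length = p then 1 else 0) := by
  unfold NbcBefore
  rw [Finset.range_add_one, Finset.filter_insert]
  have hfil : (Finset.range W.length).filter
        (fun j => isBC ((W ++ [ℓ]).getD j 0) = true ∧ aParity (W ++ [ℓ]) j = p)
      = (Finset.range W.length).filter
        (fun j => isBC (W.getD j 0) = true ∧ aParity W j = p) := by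
    apply Finset.filter_congr
    intro j hj
    rw [Finset.mem_range] at hj
    rw [List.getD_append _ _ _ _ hj, aParity_append' W ℓ j hj.le]
  rw [hfil, getD_append_last, aParity_append' W ℓ W.length le_rfl]
  split_ifs with h
  · rw [Finset.card_insert_of_notMem]
    intro hmem
    exact absurd (Finset.mem_range.mp (Finset.filter_subset _ _ hmem)) (lt_irrefl _)
  · simp

lemma Nbc2_append (W : List (Fin 4)) (ℓ : Fin 4) :
    Nbc2 (W ++ [ℓ]) 1 1 = Nbc2 W 1 1 +
      (if isBC ℓ = true ∧ aParity W W.length = 1 ∧ NbcBefore W 0 W.length % 2 = 1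
        then 1 else 0) := by
  unfold Nbc2
  simp only [Nat.sub_self, List.length_append, List.length_singleton]
  rw [Finset.range_add_one, Finset.filter_insert]
  have hfil : (Finset.range W.length).filter
        (fun i => isBC ((W ++ [ℓ]).getD i 0) = true ∧ aParity (W ++ [ℓ]) i = 1 ∧
          NbcBefore (W ++ [ℓ]) 0 i % 2 = 1)
      = (Finset.range W.length).filter
        (fun i => isBC (W.getD i 0) = true ∧ aParity W i = 1 ∧
          NbcBefore W 0 i % 2 = 1) := by
    apply Finset.filter_congr
    intro j hj
    rw [Finset.mem_range] at hj
    rw [List.getD_append _ _ _ _ hj, aParity_append' W ℓ j hj.le,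
      NbcBefore_append' W ℓ 0 j hj.le]
  rw [hfil, getD_append_last, aParity_append' W ℓ W.length le_rfl,
    NbcBefore_append' W ℓ 0 W.length le_rfl]
  split_ifs with h
  · rw [Finset.card_insert_of_notMem]
    intro hmem
    exact absurd (Finset.mem_range.mp (Finset.filter_subset _ _ hmem)) (lt_irrefl _)
  · simp

lemma count_append_last (W : List (Fin 4)) (ℓ : Fin 4) :
    (W ++ [ℓ]).count 0 = W.count 0 + (if ℓ = 0 then 1 else 0) := by
  rw [List.count_append]
  congr 1
  by_cases h : ℓ = (0 : Fin 4) <;> simp [h, List.count_singleton]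

lemma aParity_length (W : List (Fin 4)) : aParity W W.length = W.count 0 % 2 := by
  simp [aParity, List.take_length]

lemma master (W : List (Fin 4)) :
    ((W.map gen).prod [] = true ↔ W.count 0 % 2 = 1) ∧
    ((W.map gen).prod [false] = true ↔ NbcBefore W 0 W.length % 2 = 1) ∧
    (beta ((W.map gen).prod) false true = true ↔ Nbc2 W 1 1 % 2 = 1) := by
  induction W using List.reverseRecOn with
  | nil =>
      refine ⟨by simp [one_apply], by simp [NbcBefore, one_apply], ?_⟩
      simp [Nbc2, beta, one_apply]
  | append_singleton W ℓ ih =>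
      obtain ⟨ih0, ih1, ih2⟩ := ih
      rw [List.map_append, List.prod_append, List.map_singleton, List.prod_singleton]
      set g := (W.map gen).prod with hg
      refine ⟨?_, ?_, ?_⟩
      · rw [mul_apply_nil, gen_nil, count_append_last]
        by_cases hℓ : ℓ = (0 : Fin 4) <;> cases hgb : g [] <;> rw [hgb] at ih0 <;>
          simp [hℓ] at ih0 ⊢ <;> omega
      · rw [mul_apply_single, gen_single, List.length_append, List.length_singleton,
          NbcBefore_append_succ, aParity_length]
        cases hbc : isBC ℓ <;> cases hgb : g [] <;> cases hg1 : g [false] <;>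
          rw [hgb] at ih0 <;> rw [hg1] at ih1 <;>
          simp at ih0 ih1 ⊢ <;> (try split_ifs with h) <;> omega
      · rw [beta_mul, beta_gen, Nbc2_append, aParity_length]
        cases hbc : isBC ℓ <;> cases hgb : g [] <;> cases hg1 : g [false] <;>
          cases hb : beta g false true <;>
          rw [hgb] at ih0 <;> rw [hg1] at ih1 <;> rw [hb] at ih2 <;>
          simp at ih0 ih1 ih2 ⊢ <;> (try split_ifs with h) <;> omega

end AuxProof


/-- If the word `W` over `{a,b,c,d}` represents the element `g` of the
Grigorchuk group, then `N^{1,1}_{b,c}(W) ≡ β₀₁(g)` modulo 2. -/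
theorem Nbc2_one_one_eq_beta01
    (W : List (Fin 4)) (g : AutT) (hg : g ∈ Grigorchuk)
    (hW : (W.map gen).prod = g) :
    Nbc2 W 1 1 ≡ (if beta g false true = true then 1 else 0) [MOD 2] := by
  subst hW
  obtain ⟨-, -, h3⟩ := master W
  unfold Nat.ModEq
  split_ifs with hb
  · rw [h3.mp hb]
  · have h4 : ¬ Nbc2 W 1 1 % 2 = 1 := fun h => hb (h3.mpr h)
    omega
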